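/- (Strict improvement when non-optimal.) Let π : S → A be a deterministic policy with value function v_π that does NOT satisfy the Bellman optimality equation, i.e., there exists a state s₀ with v_π s₀ ≠ max_{a ∈ A} (r s₀ a + γ * ∑_{s'} P s₀ a s' * v_π s'). Let π' be greedy with respect to q_π, i.e., q_π(s, π' s) = max_{a ∈ A} q_π(s, a) for all s, where q_π(s, a) = r s a + γ * ∑_{s'} P s a s' * v_π s'. Then v_π s ≤ v_{π'} s for all s ∈ S and v_{π'} ≠ v_π. -/

import Mathlib

/-!
Write `T'` for the Bellman operator of the greedy policy `π'`. Greediness gives `vπ ≤ T' vπ`,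
while `vπ' = T' vπ'`, so `d = vπ' - vπ` satisfies `γ • P' d ≤ d` for the stochastic matrix `P'`
of `π'`. At a minimum point of `d` this forces `(1 - γ) · min d ≥ 0`, hence `vπ ≤ vπ'`. If the
two value functions coincided, `vπ = T' vπ` would be the Bellman optimality equation.
-/

open Finset

section StochasticKernel

variable {S : Type*} [Fintype S] {K : S → S → ℝ}

theorem le_sum_mul_of_forall_le (hK0 : ∀ s s', 0 ≤ K s s') (hK1 : ∀ s, ∑ s', K s s' = 1)
    {d : S → ℝ} {m : ℝ} (hm : ∀ s, m ≤ d s) (s : S) : m ≤ ∑ s', K s s' * d s' :=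
  calc m = ∑ s', K s s' * m := by rw [← sum_mul, hK1, one_mul]
    _ ≤ ∑ s', K s s' * d s' := sum_le_sum fun s' _ => mul_le_mul_of_nonneg_left (hm s') (hK0 s s')

theorem nonneg_of_discount_mul_sum_le (hK0 : ∀ s s', 0 ≤ K s s') (hK1 : ∀ s, ∑ s', K s s' = 1)
    {γ : ℝ} (hγ0 : 0 ≤ γ) (hγ1 : γ < 1) {d : S → ℝ}
    (hd : ∀ s, γ * ∑ s', K s s' * d s' ≤ d s) (s : S) : 0 ≤ d s := by
  have : Nonempty S := ⟨s⟩
  obtain ⟨s₀, -, hs₀⟩ := exists_min_image univ d univ_nonempty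
  have hmin : ∀ s, d s₀ ≤ d s := fun s => hs₀ s (mem_univ s)
  have havg := le_sum_mul_of_forall_le hK0 hK1 hmin s₀
  have : 0 ≤ d s₀ := by nlinarith [hd s₀]
  exact this.trans (hmin s)

end StochasticKernel

section MDP

variable {S A : Type*} [Fintype S]

/-- The paper's `q_π` is `qValue P r γ v_π`. -/
def qValue (P : S → A → S → ℝ) (r : S → A → ℝ) (γ : ℝ) (v : S → ℝ) (s : S) (a : A) : ℝ :=
  r s a + γ * ∑ s', P s a s' * v s'

theorem le_of_le_qValue_of_eq_qValue {P : S → A → S → ℝ} (hP0 : ∀ s a s', 0 ≤ P s a s')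
    (hP1 : ∀ s a, ∑ s', P s a s' = 1) (r : S → A → ℝ) {γ : ℝ} (hγ0 : 0 ≤ γ) (hγ1 : γ < 1)
    (π : S → A) {v w : S → ℝ} (hv : ∀ s, v s ≤ qValue P r γ v s (π s))
    (hw : ∀ s, w s = qValue P r γ w s (π s)) (s : S) : v s ≤ w s := by
  have hdiff : ∀ s, γ * ∑ s', P s (π s) s' * (w s' - v s') ≤ w s - v s := by
    intro s
    have hv := hv s
    have hw := hw s
    simp only [qValue, mul_sub, sum_sub_distrib] at hv hw ⊢
    linarith
  exact sub_nonneg.mp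
    (nonneg_of_discount_mul_sum_le (fun s => hP0 s (π s)) (fun s => hP1 s (π s)) hγ0 hγ1 hdiff s)

end MDP

theorem policy_improvement_strict_general
    {S A : Type*} [Fintype S] [Fintype A] [Nonempty A]
    (P : S → A → S → ℝ) (hP0 : ∀ s a s', 0 ≤ P s a s')
    (hP1 : ∀ s a, ∑ s', P s a s' = 1)
    (r : S → A → ℝ) (γ : ℝ) (hγ0 : 0 < γ) (hγ1 : γ < 1)
    (π π' : S → A) (vπ vπ' : S → ℝ)
    (hv : ∀ s, vπ s = r s (π s) + γ * ∑ s', P s (π s) s' * vπ s')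
    (hv' : ∀ s, vπ' s = r s (π' s) + γ * ∑ s', P s (π' s) s' * vπ' s')
    (hnotopt : ∃ s₀, vπ s₀ ≠ Finset.univ.sup' Finset.univ_nonempty
        (fun a => r s₀ a + γ * ∑ s', P s₀ a s' * vπ s'))
    (hgreedy : ∀ s, r s (π' s) + γ * ∑ s', P s (π' s) s' * vπ s'
        = Finset.univ.sup' Finset.univ_nonempty
            (fun a => r s a + γ * ∑ s', P s a s' * vπ s')) :
    (∀ s, vπ s ≤ vπ' s) ∧ vπ' ≠ vπ := by
  have hstep : ∀ s, vπ s ≤ qValue P r γ vπ s (π' s) := fun s => by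
    rw [hv s, qValue, hgreedy s]
    exact le_sup' (qValue P r γ vπ s) (mem_univ (π s))
  refine ⟨le_of_le_qValue_of_eq_qValue hP0 hP1 r hγ0.le hγ1 π' hstep hv', fun heq => ?_⟩
  obtain ⟨s₀, hs₀⟩ := hnotopt
  rw [← hgreedy s₀, ← heq] at hs₀
  exact hs₀ (hv' s₀)

/-- Strict improvement when non-optimal: a greedy improvement of a policy
whose value function violates the Bellman optimality equation yields a
pointwise-no-smaller and different value function. -/
theorem policy_improvement_strict
    {S A : Type*} [Fintype S] [Nonempty S] [Fintype A] [Nonempty A]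
    (P : S → A → S → ℝ) (hP0 : ∀ s a s', 0 ≤ P s a s')
    (hP1 : ∀ s a, ∑ s', P s a s' = 1)
    (r : S → A → ℝ) (γ : ℝ) (hγ0 : 0 < γ) (hγ1 : γ < 1)
    (π π' : S → A) (vπ vπ' : S → ℝ)
    (hv : ∀ s, vπ s = r s (π s) + γ * ∑ s', P s (π s) s' * vπ s')
    (hv' : ∀ s, vπ' s = r s (π' s) + γ * ∑ s', P s (π' s) s' * vπ' s')
    (hnotopt : ∃ s₀, vπ s₀ ≠ Finset.univ.sup' Finset.univ_nonempty
        (fun a => r s₀ a + γ * ∑ s', P s₀ a s' * vπ s'))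
    (hgreedy : ∀ s, r s (π' s) + γ * ∑ s', P s (π' s) s' * vπ s'
        = Finset.univ.sup' Finset.univ_nonempty
            (fun a => r s a + γ * ∑ s', P s a s' * vπ s')) :
    (∀ s, vπ s ≤ vπ' s) ∧ vπ' ≠ vπ :=
  policy_improvement_strict_general P hP0 hP1 r γ hγ0 hγ1 π π' vπ vπ' hv hv' hnotopt hgreedy
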